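/- Let x be a nilpotent endomorphism of an n-dimensional k-vector space with Jordan basis {v_{ij}} and Jordan type λ. For y commuting with x, the determinant of y equals the product over distinct part sizes l_h of λ (with multiplicity n_{l_h}) of det((c_{i,λ_i}^{r,λ_r}(y))_{i,r ∈ I_h})^{l_h}, where I_h = {i : λ_i = l_h}. In particular, y is invertible if and only if each matrix (c_{i,λ_i}^{r,λ_r}(y))_{i,r ∈ I_h} is invertible. -/

import Mathlib

/-!
Order the Jordan basis by level `j` first and by block `h` second; the matrix of `y` is then
block triangular. Indeed, `x ^ (j + 1)` kills `y v` for `v` of level `j`, so `y v` has no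
components of higher level. And writing `v = x ^ s w` with `w` the vector `s` places up the same
string, the coefficient of `v'` in `y v` is the coefficient in `y w` of the vector `s` places
above `v'` (or `0` if there is none). Taking `w` at the top of its string, of length `d h`, and
`v'` at the level of `v`, this is an entry of `M h` when `v'` lies in block `h`, and `0` when
its block `h'` has `d h' < d h`. So the diagonal block at level `j` of block `h` is `(M h)ᵀ`,
once for each of the `d h` levels.
-/

open Matrix

abbrev JordanIndex {m : ℕ} (d nh : Fin m → ℕ) : Type := Σ h : Fin m, Fin (nh h) × Fin (d h)

def JordanLevel {m : ℕ} (d : Fin m → ℕ) : Type := Σ h : Fin m, Fin (d h)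

namespace JordanLevel

variable {m : ℕ} {d : Fin m → ℕ}

instance : Fintype (JordanLevel d) := inferInstanceAs (Fintype (Σ h : Fin m, Fin (d h)))

def toLexPair (q : JordanLevel d) : ℕ ×ₗ Fin m := toLex ((q.2 : ℕ), q.1)

theorem toLexPair_injective : Function.Injective (toLexPair (d := d)) := by
  rintro ⟨h, j⟩ ⟨h', j'⟩ hq
  simp only [toLexPair, toLex_inj, Prod.mk.injEq] at hq
  obtain ⟨hj, rfl⟩ := hq
  rw [Fin.ext hj]

instance : LinearOrder (JordanLevel d) := LinearOrder.lift' toLexPair toLexPair_injective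

theorem prod_fst_eq_prod_pow {M : Type*} [CommMonoid M] (f : Fin m → M) :
    ∏ q : JordanLevel d, f q.1 = ∏ h, f h ^ d h := by
  change ∏ q : Σ h : Fin m, Fin (d h), f q.1 = _
  simp [Fintype.prod_sigma]

end JordanLevel

namespace JordanIndex

variable {m : ℕ} {d nh : Fin m → ℕ}

theorem mk_eq_mk_iff {h h' : Fin m} {i : Fin (nh h)} {i' : Fin (nh h')} {j : Fin (d h)}
    {j' : Fin (d h')} :
    (⟨h, (i, j)⟩ : JordanIndex d nh) = ⟨h', (i', j')⟩ ↔
      h = h' ∧ (i : ℕ) = i' ∧ (j : ℕ) = j' := by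
  constructor
  · rintro ⟨⟩
    exact ⟨rfl, rfl, rfl⟩
  · rintro ⟨rfl, hi, hj⟩
    rw [Fin.ext hi, Fin.ext hj]

def level (a : JordanIndex d nh) : JordanLevel d := ⟨a.1, a.2.2⟩

noncomputable def levelFiberEquiv (q : JordanLevel d) :
    Fin (nh q.1) ≃ {a : JordanIndex d nh // a.level = q} :=
  Equiv.ofBijective (fun i => ⟨⟨q.1, (i, q.2)⟩, rfl⟩) <| by
    refine ⟨fun i i' hii' => ?_, ?_⟩
    · simpa using congrArg Subtype.val hii'
    · rintro ⟨⟨h, i, j⟩, ⟨⟩⟩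
      exact ⟨i, rfl⟩

theorem det_toSquareBlock_level {R : Type*} [CommRing R]
    (A : Matrix (JordanIndex d nh) (JordanIndex d nh) R) (q : JordanLevel d) :
    (A.toSquareBlock level q).det =
      (of fun i r : Fin (nh q.1) => A ⟨q.1, (i, q.2)⟩ ⟨q.1, (r, q.2)⟩).det := by
  rw [← det_submatrix_equiv_self (levelFiberEquiv q)]
  rfl

end JordanIndex

section

variable {k V : Type*} [Field k] [AddCommGroup V] [Module k V] {m : ℕ} {d nh : Fin m → ℕ}

def IsJordanBasis (x : Module.End k V) (B : Module.Basis (JordanIndex d nh) k V) : Prop :=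
  ∀ (h : Fin m) (i : Fin (nh h)) (j : Fin (d h)),
    x (B ⟨h, (i, j)⟩) =
      if 0 < (j : ℕ) then
        B ⟨h, (i, ⟨(j : ℕ) - 1, by omega⟩)⟩
      else 0

namespace IsJordanBasis

variable {x : Module.End k V} {B : Module.Basis (JordanIndex d nh) k V}

theorem pow_apply (hB : IsJordanBasis x B) (t : ℕ) (h : Fin m) (i : Fin (nh h)) (j : Fin (d h)) :
    (x ^ t) (B ⟨h, (i, j)⟩) = if t ≤ j then B ⟨h, (i, ⟨j - t, by omega⟩)⟩ else 0 := by
  induction t generalizing j with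
  | zero => simp
  | succ t ih =>
    rw [pow_succ', Module.End.mul_apply, ih]
    by_cases ht : t + 1 ≤ j
    · rw [if_pos (by omega), if_pos ht, hB, if_pos (by simp only; omega)]
      congr 3
    · rw [if_neg ht]
      split_ifs
      · rw [hB, if_neg (by simp only; omega)]
      · exact map_zero x

theorem repr_pow_apply (hB : IsJordanBasis x B) (t : ℕ) (w : V) (h : Fin m) (i : Fin (nh h))
    (j : Fin (d h)) :
    B.repr ((x ^ t) w) ⟨h, (i, j)⟩ =
      if hj : j + t < d h then B.repr w ⟨h, (i, ⟨j + t, hj⟩)⟩ else 0 := by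
  have key : B.coord ⟨h, (i, j)⟩ ∘ₗ (x ^ t) =
      if hj : j + t < d h then B.coord ⟨h, (i, ⟨j + t, hj⟩)⟩ else 0 := by
    refine B.ext fun ⟨h', i', j'⟩ => ?_
    rw [LinearMap.comp_apply, hB.pow_apply]
    obtain rfl | hh := eq_or_ne h' h
    · split_ifs <;>
        simp only [Module.Basis.coord_apply, Module.Basis.repr_self, Finsupp.single_apply,
          JordanIndex.mk_eq_mk_iff, true_and, map_zero, LinearMap.zero_apply] <;>
        split_ifs <;> first | rfl | (exfalso; omega)
    · split_ifs <;> simp [hh.symm]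
  have := LinearMap.congr_fun key w
  split_ifs at this ⊢ <;> simpa using this

theorem basis_eq_pow_apply (hB : IsJordanBasis x B) {h : Fin m} (i : Fin (nh h)) (j : Fin (d h))
    (s : ℕ) (hs : j + s < d h) : B ⟨h, (i, j)⟩ = (x ^ s) (B ⟨h, (i, ⟨j + s, hs⟩)⟩) := by
  rw [hB.pow_apply, if_pos (by simp only; omega)]
  simp

theorem repr_eq_zero_of_pow_apply_eq_zero (hB : IsJordanBasis x B) {t : ℕ} {w : V}
    (hw : (x ^ t) w = 0) {h : Fin m} (i : Fin (nh h)) (j : Fin (d h)) (hj : t ≤ j) :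
    B.repr w ⟨h, (i, j)⟩ = 0 := by
  have := hB.repr_pow_apply t w h i ⟨j - t, by omega⟩
  rw [hw, dif_pos (by simp only; omega)] at this
  simpa [Nat.sub_add_cancel hj] using this.symm

variable {y : Module.End k V}

theorem repr_apply_basis_shift (hB : IsJordanBasis x B) (hxy : Commute x y) {h h' : Fin m}
    (i : Fin (nh h)) (i' : Fin (nh h')) (j : Fin (d h)) (j' : Fin (d h')) (s : ℕ)
    (hs : j + s < d h) :
    B.repr (y (B ⟨h, (i, j)⟩)) ⟨h', (i', j')⟩ =
      if hs' : j' + s < d h' then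
        B.repr (y (B ⟨h, (i, ⟨j + s, hs⟩)⟩)) ⟨h', (i', ⟨j' + s, hs'⟩)⟩
      else 0 := by
  rw [hB.basis_eq_pow_apply i j s hs, ← Module.End.mul_apply, ← (hxy.pow_left s).eq,
    Module.End.mul_apply, hB.repr_pow_apply]

theorem repr_apply_basis_eq_zero_of_lt (hB : IsJordanBasis x B) (hxy : Commute x y)
    {h h' : Fin m} (i : Fin (nh h)) (i' : Fin (nh h')) (j : Fin (d h)) (j' : Fin (d h'))
    (hjj' : (j : ℕ) < j') : B.repr (y (B ⟨h, (i, j)⟩)) ⟨h', (i', j')⟩ = 0 := by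
  refine hB.repr_eq_zero_of_pow_apply_eq_zero (t := j + 1) ?_ i' j' hjj'
  rw [← Module.End.mul_apply, (hxy.pow_left _).eq, Module.End.mul_apply, hB.pow_apply,
    if_neg (by omega), map_zero]

theorem repr_apply_basis_eq_top (hB : IsJordanBasis x B) (hxy : Commute x y) {h : Fin m}
    (i r : Fin (nh h)) (j : Fin (d h)) :
    B.repr (y (B ⟨h, (i, j)⟩)) ⟨h, (r, j)⟩ =
      B.repr (y (B ⟨h, (i, ⟨d h - 1, Nat.sub_one_lt_of_lt j.isLt⟩)⟩))
        ⟨h, (r, ⟨d h - 1, Nat.sub_one_lt_of_lt j.isLt⟩)⟩ := by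
  have hjtop : (j : ℕ) + (d h - 1 - j) = d h - 1 := by omega
  rw [hB.repr_apply_basis_shift hxy i r j j (d h - 1 - j) (by omega), dif_pos (by omega)]
  simp only [hjtop]

theorem toMatrix_blockTriangular (hB : IsJordanBasis x B) (hd : StrictAnti d)
    (hxy : Commute x y) : (LinearMap.toMatrix B B y).BlockTriangular JordanIndex.level := by
  rintro ⟨ha, ia, ja⟩ ⟨hb, ib, jb⟩ hlt
  change toLex ((jb : ℕ), hb) < toLex ((ja : ℕ), ha) at hlt
  rw [LinearMap.toMatrix_apply]
  rcases Prod.Lex.toLex_lt_toLex.1 hlt with hj | ⟨hj, hh⟩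
  · exact hB.repr_apply_basis_eq_zero_of_lt hxy ib ia jb ja hj
  · dsimp only at hj hh
    have := hd hh
    rw [hB.repr_apply_basis_shift hxy ib ia jb ja (d hb - 1 - jb) (by omega), dif_neg (by omega)]

end IsJordanBasis

end

/-- The Jordan type has distinct parts `d 0 > d 1 > ⋯` with multiplicities `nh h`, and
`B ⟨h, (i, j)⟩` is the vector `v_{i, j + 1}` of the `i`-th string of length `d h`, so `x` lowers
`j` and the top vectors `v_{i, λ_i}` have `j = d h - 1`. -/
theorem stmt5_general (k : Type*) [Field k] (V : Type*) [AddCommGroup V] [Module k V]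
    (x y : Module.End k V) (m : ℕ) (d nh : Fin m → ℕ)
    (hd : StrictAnti d) (hdpos : ∀ h, 0 < d h)
    (B : Module.Basis (Σ h : Fin m, Fin (nh h) × Fin (d h)) k V)
    (hB : ∀ (h : Fin m) (i : Fin (nh h)) (j : Fin (d h)),
      x (B ⟨h, (i, j)⟩) =
        if hj : 0 < (j : ℕ) then
          B ⟨h, (i, ⟨(j : ℕ) - 1, Nat.lt_of_le_of_lt (Nat.sub_le _ _) j.isLt⟩)⟩
        else 0)
    (hcomm : x * y = y * x)
    (c : (Σ h : Fin m, Fin (nh h) × Fin (d h)) → (Σ h : Fin m, Fin (nh h) × Fin (d h)) → k)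
    (hc : ∀ a b, c a b = B.repr (y (B a)) b)
    (M : ∀ h : Fin m, Matrix (Fin (nh h)) (Fin (nh h)) k)
    (hM : ∀ (h : Fin m) (i r : Fin (nh h)),
      M h i r = c ⟨h, (i, ⟨d h - 1, Nat.sub_lt (hdpos h) one_pos⟩)⟩
                  ⟨h, (r, ⟨d h - 1, Nat.sub_lt (hdpos h) one_pos⟩)⟩) :
    LinearMap.det (y : V →ₗ[k] V) = ∏ h : Fin m, (M h).det ^ (d h) ∧
    (IsUnit y ↔ ∀ h : Fin m, IsUnit (M h)) := by
  have hJ : IsJordanBasis x B := hB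
  have hdiag (h : Fin m) (j : Fin (d h)) :
      (of fun i r => LinearMap.toMatrix B B y ⟨h, (i, j)⟩ ⟨h, (r, j)⟩) = (M h)ᵀ := by
    ext i r
    rw [of_apply, LinearMap.toMatrix_apply, hJ.repr_apply_basis_eq_top hcomm, transpose_apply,
      hM, hc]
  have hdet : LinearMap.det y = ∏ h, (M h).det ^ d h := by
    rw [← LinearMap.det_toMatrix B, (hJ.toMatrix_blockTriangular hd hcomm).det_fintype,
      ← JordanLevel.prod_fst_eq_prod_pow]
    simp only [JordanIndex.det_toSquareBlock_level, hdiag, det_transpose]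
  have : Module.Finite k V := .of_basis B
  refine ⟨hdet, ?_⟩
  rw [LinearMap.isUnit_iff_isUnit_det, hdet, IsUnit.prod_univ_iff]
  exact forall_congr' fun h => by rw [isUnit_pow_iff (hdpos h).ne', ← isUnit_iff_isUnit_det]

/-- `x` nilpotent with Jordan basis indexed by blocks: the Jordan type has
distinct part sizes `d 0 > d 1 > ...` with multiplicities `nh h`, index set
`I_h ≅ Fin (nh h)`.  For `y` commuting with `x`, `det y = ∏_h det(M_h)^{d h}`, where
`M_h` is the matrix of leading coefficients `c_{i,λ_i}^{r,λ_r}(y)` for `i, r ∈ I_h`;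
in particular `y` is invertible iff each `M_h` is. -/
theorem stmt5 (k : Type*) [Field k] (V : Type*) [AddCommGroup V] [Module k V]
    (x y : Module.End k V) (m : ℕ) (d nh : Fin m → ℕ)
    (hd : StrictAnti d) (hdpos : ∀ h, 0 < d h) (hnpos : ∀ h, 0 < nh h)
    (B : Module.Basis (Σ h : Fin m, Fin (nh h) × Fin (d h)) k V)
    (hB : ∀ (h : Fin m) (i : Fin (nh h)) (j : Fin (d h)),
      x (B ⟨h, (i, j)⟩) =
        if hj : 0 < (j : ℕ) then
          B ⟨h, (i, ⟨(j : ℕ) - 1, Nat.lt_of_le_of_lt (Nat.sub_le _ _) j.isLt⟩)⟩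
        else 0)
    (hcomm : x * y = y * x)
    (c : (Σ h : Fin m, Fin (nh h) × Fin (d h)) → (Σ h : Fin m, Fin (nh h) × Fin (d h)) → k)
    (hc : ∀ a b, c a b = B.repr (y (B a)) b)
    (M : ∀ h : Fin m, Matrix (Fin (nh h)) (Fin (nh h)) k)
    (hM : ∀ (h : Fin m) (i r : Fin (nh h)),
      M h i r = c ⟨h, (i, ⟨d h - 1, Nat.sub_lt (hdpos h) one_pos⟩)⟩
                  ⟨h, (r, ⟨d h - 1, Nat.sub_lt (hdpos h) one_pos⟩)⟩) :
    LinearMap.det (y : V →ₗ[k] V) = ∏ h : Fin m, (M h).det ^ (d h) ∧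
    (IsUnit y ↔ ∀ h : Fin m, IsUnit (M h)) :=
  stmt5_general k V x y m d nh hd hdpos B hB hcomm c hc M hM
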